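/- Let X be an exterior space such that for every E ∈ ε(X) there is E' ∈ ε(X) with E' ⊂ E and the image of π₀(E') → π₀(E) finite. Then L(Č₀(X)) is compact. If in addition, for every E ∈ ε(X), the set X ∖ (∪_{C ∈ η₀,E(Ě(X))} C) is compact, then Č₀(X) is compact. -/

import Mathlib

open Set Topology Filter

universe u v

/-- An externology on a topological space: a nonempty family of open subsets closed under
finite intersections and under open supersets. -/
structure Externology (X : Type u) [TopologicalSpace X] where
  sets : Set (Set X)
  nonempty' : sets.Nonempty
  isOpen' : ∀ E ∈ sets, IsOpen E
  inter' : ∀ E ∈ sets, ∀ F ∈ sets, E ∩ F ∈ sets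
  superset' : ∀ E ∈ sets, ∀ U : Set X, IsOpen U → E ⊆ U → U ∈ sets

variable {X : Type u} {Y : Type v} [TopologicalSpace X] [TopologicalSpace Y]

/-- The limit space `L(X)` of an exterior space: the intersection of all exterior open sets. -/
def Elimit (ε : Externology X) : Set X := ⋂₀ ε.sets

/-- `V` is a `q₀`-saturated open subset of `E`: an open subset of `E` which is a union of
path-components of `E`. -/
def IsQSatOpen (E V : Set X) : Prop :=
  V ⊆ E ∧ IsOpen V ∧ ∀ x ∈ V, pathComponentIn E x ⊆ V

/-- An end point of an exterior space: a compatible choice of a path-component of each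
exterior open subset. -/
structure EndPt (ε : Externology X) where
  comp : Set X → Set X
  isComp' : ∀ E ∈ ε.sets, ∃ x ∈ E, comp E = pathComponentIn E x
  mono' : ∀ E ∈ ε.sets, ∀ F ∈ ε.sets, E ⊆ F → comp E ⊆ comp F

/-- The inverse limit topology on the end space. -/
instance EndPt.instTopologicalSpace (ε : Externology X) : TopologicalSpace (EndPt ε) :=
  .generateFrom {S | ∃ E ∈ ε.sets, ∃ V : Set X, IsQSatOpen E V ∧
    S = {a : EndPt ε | a.comp E ⊆ V}}

/-- The canonical map `e₀ : L(X) → Ě(X)` sending a point of the limit space to the family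
of its path-components. -/
def endOf (ε : Externology X) (x : Elimit ε) : EndPt ε where
  comp E := pathComponentIn E (x : X)
  isComp' E hE := ⟨(x : X), x.2 E hE, rfl⟩
  mono' _E _hE _F _hF h := pathComponentIn_mono h

/-- The gluing relation of the push-out `X ∪_{L(X)} Ě(X)`. -/
inductive CompletionRel (ε : Externology X) : X ⊕ EndPt ε → X ⊕ EndPt ε → Prop
  | glue (x : Elimit ε) : CompletionRel ε (Sum.inl (x : X)) (Sum.inr (endOf ε x))

/-- The underlying set of the completion: the push-out `X ∪_{L(X)} Ě(X)`. -/
def CompletionPts (ε : Externology X) : Type u := Quot (CompletionRel ε)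

/-- The canonical map `p₀ : X → X ∪_{L(X)} Ě(X)`. -/
def p0 (ε : Externology X) : X → CompletionPts ε := fun x => Quot.mk _ (Sum.inl x)

/-- The canonical map `incl₀ : Ě(X) → X ∪_{L(X)} Ě(X)`. -/
def incl0 (ε : Externology X) : EndPt ε → CompletionPts ε := fun a => Quot.mk _ (Sum.inr a)

/-- The family `𝒢₀` of subsets of the push-out `X ∪_{L(X)} Ě(X)`: `W ∈ 𝒢₀` iff `p₀⁻¹ W` is
open in `X`, `incl₀⁻¹ W` is open in `Ě(X)`, and each end `a ∈ incl₀⁻¹ W` admits `E ∈ ε(X)`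
and an open `G ⊆ π₀(E)` (encoded by the saturated open set `V = q₀⁻¹ G ⊆ E`) with
`a ∈ η₀⁻¹ G ⊆ incl₀⁻¹ W` and `q₀⁻¹ G ⊆ p₀⁻¹ W`. -/
def G0 (ε : Externology X) : Set (Set (CompletionPts ε)) :=
  {W | IsOpen (p0 ε ⁻¹' W) ∧ IsOpen {a : EndPt ε | incl0 ε a ∈ W} ∧
    ∀ a : EndPt ε, incl0 ε a ∈ W →
      ∃ E ∈ ε.sets, ∃ V : Set X, IsQSatOpen E V ∧ a.comp E ⊆ V ∧
        (∀ b : EndPt ε, b.comp E ⊆ V → incl0 ε b ∈ W) ∧ ∀ x ∈ V, p0 ε x ∈ W}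

/-- The topology `𝒢₀` on the completion. -/
instance CompletionPts.instTopologicalSpace (ε : Externology X) :
    TopologicalSpace (CompletionPts ε) := .generateFrom (G0 ε)

/-- The basic exterior subset `W₀(E) = p₀(E) ∪ incl₀(Ě(X))` of the completion. -/
def W0 (ε : Externology X) (E : Set X) : Set (CompletionPts ε) :=
  p0 ε '' E ∪ Set.range (incl0 ε)

lemma W0_mono (ε : Externology X) {E F : Set X} (h : E ⊆ F) : W0 ε E ⊆ W0 ε F :=
  union_subset_union_left _ (image_mono h)

/-- The externology of the completion `Č₀(X)`, with base `{W₀(E) | E ∈ ε(X)}`. -/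
def completionExternology (ε : Externology X) : Externology (CompletionPts ε) where
  sets := {U | IsOpen U ∧ ∃ E ∈ ε.sets, W0 ε E ⊆ U}
  nonempty' := by
    obtain ⟨E, hE⟩ := ε.nonempty'
    exact ⟨univ, isOpen_univ, E, hE, subset_univ _⟩
  isOpen' := fun U hU => hU.1
  inter' := by
    rintro U ⟨hUo, E, hE, hEU⟩ V ⟨hVo, F, hF, hFV⟩
    refine ⟨hUo.inter hVo, E ∩ F, ε.inter' E hE F hF, ?_⟩
    exact subset_inter ((W0_mono ε inter_subset_left).trans hEU)
      ((W0_mono ε inter_subset_right).trans hFV)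
  superset' := by
    rintro U ⟨hUo, E, hE, hEU⟩ V hVo hUV
    exact ⟨hVo, E, hE, hEU.trans hUV⟩

/-- An exterior map between exterior spaces. -/
def IsExteriorMap (εX : Externology X) (εY : Externology Y) (f : X → Y) : Prop :=
  Continuous f ∧ ∀ E ∈ εY.sets, f ⁻¹' E ∈ εX.sets

/-- An isomorphism of exterior spaces. -/
def IsExteriorIso (εX : Externology X) (εY : Externology Y) (f : X → Y) : Prop :=
  IsExteriorMap εX εY f ∧ ∃ g : Y → X, IsExteriorMap εY εX g ∧ g ∘ f = id ∧ f ∘ g = id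

/-- An exterior space is `Č₀`-complete if the canonical map `p₀ : X → Č₀(X)` is an
isomorphism of exterior spaces. -/
def C0Complete (ε : Externology X) : Prop :=
  IsExteriorIso ε (completionExternology ε) (p0 ε)

/-- A `π₀`-`ε(X)`-net: a net eventually contained in a single path-component of every
exterior open set. -/
def IsPi0Net {D : Type*} [Preorder D] (ε : Externology X) (u : D → X) : Prop :=
  ∀ E ∈ ε.sets, ∃ C : Set X, (∃ y ∈ E, C = pathComponentIn E y) ∧ ∀ᶠ δ in atTop, u δ ∈ C

/-- The `r`-exterior externology of a flow: open sets absorbing every positive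
semi-trajectory. -/
def rExt (φ : Flow ℝ X) : Externology X where
  sets := {N | IsOpen N ∧ ∀ x : X, ∃ r₀ : ℝ, ∀ t : ℝ, r₀ < t → φ t x ∈ N}
  nonempty' := ⟨univ, isOpen_univ, fun _ => ⟨0, fun _ _ => mem_univ _⟩⟩
  isOpen' := fun _ hN => hN.1
  inter' := by
    rintro N ⟨hNo, hN⟩ M ⟨hMo, hM⟩
    refine ⟨hNo.inter hMo, fun x => ?_⟩
    obtain ⟨r, hr⟩ := hN x
    obtain ⟨s, hs⟩ := hM x
    exact ⟨max r s, fun t ht =>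
      ⟨hr t ((le_max_left r s).trans_lt ht), hs t ((le_max_right r s).trans_lt ht)⟩⟩
  superset' := by
    rintro N ⟨_, hN⟩ U hUo hNU
    exact ⟨hUo, fun x => (hN x).imp fun r h t ht => hNU (h t ht)⟩

/-- The `ω^r`-limit set of a point for a flow. -/
def omegaR (φ : Flow ℝ X) (x : X) : Set X :=
  ⋂ t : ℝ, closure ((fun s : ℝ => φ s x) '' Ici t)

/-- The set of critical (rest) points of a flow. -/
def criticalSet (φ : Flow ℝ X) : Set X := {x | ∀ r : ℝ, φ r x = x}

/-- The set of periodic points of a flow. -/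
def periodicSet (φ : Flow ℝ X) : Set X := {x | ∃ r : ℝ, r ≠ 0 ∧ φ r x = x}

/-- The global `Ω^r`-limit of a flow. -/
def OmegaRSet (φ : Flow ℝ X) : Set X := ⋃ x : X, omegaR φ x

/-- The compatibility conditions making an exterior space with a flow an `r`-exterior flow:
`φ : ℝ^r ×̄ M_d → M` is exterior and each `F_t : M ×̄ I → M`, `F_t(x,s) = φ(ts, x)`,
is exterior. -/
structure IsRExteriorFlow (ε : Externology X) (φ : Flow ℝ X) : Prop where
  absorb : ∀ E ∈ ε.sets, ∀ x : X, ∃ r₀ : ℝ, ∀ t : ℝ, r₀ < t → φ t x ∈ E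
  homotopyExt : ∀ t : ℝ, ∀ E ∈ ε.sets, ∃ G ∈ ε.sets, ∀ x ∈ G, ∀ s ∈ Icc (0:ℝ) 1,
    φ (t * s) x ∈ E

/-! Every ultrafilter `v` on `X` is pushed by `p₀` to a convergent one. If `v` contains all exterior
sets, the finiteness hypothesis lets `v` pick, for each `E ∈ ε(X)`, one of the finitely many
components of `E` meeting a smaller exterior set `E'`; these choices are compatible and form an
end, to which `p₀ v` converges. Otherwise `v` contains the complement of some `E`, which lies in the
compact set `(⋃ a, a.comp E)ᶜ`. The same selection argument, applied to ultrafilters of ends, shows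
that `Ě(X)` is compact, hence so is its image `L(Č₀(X))`. -/

open TopologicalSpace

def Externology.HasFiniteComponentRefinements (ε : Externology X) : Prop :=
  ∀ E ∈ ε.sets, ∃ E' ∈ ε.sets, E' ⊆ E ∧
    Set.Finite {C : Set X | ∃ x ∈ E', C = pathComponentIn E x}

namespace EndPt

variable {ε : Externology X}

lemma comp_subset (a : EndPt ε) {E : Set X} (hE : E ∈ ε.sets) : a.comp E ⊆ E := by
  obtain ⟨x, -, hx⟩ := a.isComp' E hE
  exact hx ▸ pathComponentIn_subset

lemma exists_mem_comp_eq_pathComponentIn (a : EndPt ε) {E E' : Set X} (hE : E ∈ ε.sets)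
    (hE' : E' ∈ ε.sets) (hE'E : E' ⊆ E) : ∃ x ∈ E', a.comp E = pathComponentIn E x := by
  obtain ⟨x, hx, hax⟩ := a.isComp' E' hE'
  obtain ⟨y, -, hay⟩ := a.isComp' E hE
  have hxy : x ∈ pathComponentIn E y :=
    hay ▸ a.mono' E' hE' E hE hE'E (hax ▸ mem_pathComponentIn_self hx)
  exact ⟨x, hx, hay.trans (pathComponentIn_congr hxy).symm⟩

lemma exists_eventually_comp_eq (h : ε.HasFiniteComponentRefinements) {α : Type*}
    (𝒰 : Ultrafilter α) (Φ : Set X → α → Set X)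
    (hΦ : ∀ E ∈ ε.sets, ∀ E' ∈ ε.sets, E' ⊆ E →
      ∀ᶠ a in 𝒰, ∃ x ∈ E', Φ E a = pathComponentIn E x)
    (hmono : ∀ E ∈ ε.sets, ∀ F ∈ ε.sets, E ⊆ F → ∀ᶠ a in 𝒰, Φ E a ⊆ Φ F a) :
    ∃ b : EndPt ε, ∀ E ∈ ε.sets, ∀ᶠ a in 𝒰, Φ E a = b.comp E := by
  classical
  have hsel : ∀ E ∈ ε.sets, ∃ C : Set X,
      (∃ x ∈ E, C = pathComponentIn E x) ∧ ∀ᶠ a in 𝒰, Φ E a = C := by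
    intro E hE
    obtain ⟨E', hE', hE'E, hfin⟩ := h E hE
    have hcover : (⋃ C ∈ {C : Set X | ∃ x ∈ E', C = pathComponentIn E x},
        {a | Φ E a = C}) ∈ 𝒰 := by
      filter_upwards [hΦ E hE E' hE' hE'E] with a ⟨x, hx, hax⟩
      exact mem_biUnion ⟨x, hx, rfl⟩ hax
    obtain ⟨_, ⟨x, hx, rfl⟩, hC⟩ := (Ultrafilter.finite_biUnion_mem_iff hfin).1 hcover
    exact ⟨_, ⟨x, hE'E hx, rfl⟩, hC⟩
  choose C hC hΦC using hsel
  let b : EndPt ε :=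
    { comp := fun E => if hE : E ∈ ε.sets then C E hE else ∅
      isComp' := fun E hE => by simpa only [dif_pos hE] using hC E hE
      mono' := fun E hE F hF hEF => by
        obtain ⟨a, haE, haF, hsub⟩ :=
          (hΦC E hE |>.and <| (hΦC F hF).and <| hmono E hE F hF hEF).exists
        simpa only [dif_pos hE, dif_pos hF, ← haE, ← haF] using hsub }
  exact ⟨b, fun E hE => by simpa only [b, dif_pos hE] using hΦC E hE⟩

lemma compactSpace (h : ε.HasFiniteComponentRefinements) : CompactSpace (EndPt ε) := by
  refine ⟨isCompact_iff_ultrafilter_le_nhds.2 fun 𝒰 _ => ?_⟩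
  obtain ⟨b, hb⟩ := exists_eventually_comp_eq h 𝒰 (fun E a => a.comp E)
    (fun _E hE _E' hE' hE'E => .of_forall fun a =>
      a.exists_mem_comp_eq_pathComponentIn hE hE' hE'E)
    (fun E hE F hF hEF => .of_forall fun a => a.mono' E hE F hF hEF)
  refine ⟨b, mem_univ b, tendsto_nhds_generateFrom_iff.2 ?_⟩
  rintro _ ⟨E, hE, V, -, rfl⟩ hbV
  filter_upwards [hb E hE] with a ha
  show a.comp E ⊆ V
  exact ha ▸ hbV

end EndPt

section Completion

variable (ε : Externology X)

lemma continuous_p0 : Continuous (p0 ε) :=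
  continuous_generateFrom_iff.2 fun _W hW => hW.1

lemma continuous_incl0 : Continuous (incl0 ε) :=
  continuous_generateFrom_iff.2 fun _W hW => hW.2.1

lemma range_p0_union_range_incl0 : range (p0 ε) ∪ range (incl0 ε) = univ :=
  eq_univ_of_forall <| Quot.ind fun
    | .inl x => Or.inl ⟨x, rfl⟩
    | .inr a => Or.inr ⟨a, rfl⟩

variable {ε}

lemma p0_preimage_W0 {E : Set X} (hE : E ∈ ε.sets) : p0 ε ⁻¹' W0 ε E = E := by
  refine Subset.antisymm (fun x hx => ?_) fun x hx => Or.inl ⟨x, hx, rfl⟩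
  -- `L(X) ⊆ E`, so membership in `E` is compatible with the gluing.
  let inW0 : CompletionPts ε → Prop :=
    Quot.lift (Sum.elim (· ∈ E) fun _ => True) fun _ _ ⟨y⟩ => eq_true (y.2 E hE)
  have hW0 : ∀ z ∈ W0 ε E, inW0 z := by
    rintro _ (⟨y, hy, rfl⟩ | ⟨a, rfl⟩)
    exacts [hy, trivial]
  exact hW0 _ hx

lemma W0_mem_G0 {E : Set X} (hE : E ∈ ε.sets) : W0 ε E ∈ G0 ε := by
  have hends : {a : EndPt ε | incl0 ε a ∈ W0 ε E} = univ :=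
    eq_univ_of_forall fun a => Or.inr (mem_range_self a)
  refine ⟨(p0_preimage_W0 hE).symm ▸ ε.isOpen' E hE, hends ▸ isOpen_univ, fun a _ => ?_⟩
  exact ⟨E, hE, E, ⟨Subset.rfl, ε.isOpen' E hE, fun _ _ => pathComponentIn_subset⟩,
    a.comp_subset hE, fun b _ => Or.inr (mem_range_self b), fun x hx => Or.inl ⟨x, hx, rfl⟩⟩

variable (ε) in
lemma elimit_completionExternology :
    Elimit (completionExternology ε) = range (incl0 ε) := by
  refine Subset.antisymm (fun z hz => ?_) ?_
  · rcases (range_p0_union_range_incl0 ε).symm ▸ mem_univ z with ⟨x, rfl⟩ | hz'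
    · by_cases hx : x ∈ Elimit ε
      · exact ⟨endOf ε ⟨x, hx⟩, (Quot.sound (CompletionRel.glue ⟨x, hx⟩)).symm⟩
      · obtain ⟨E, hE, hxE⟩ : ∃ E ∈ ε.sets, x ∉ E := by
          simpa [Elimit] using hx
        have hW0 : W0 ε E ∈ (completionExternology ε).sets :=
          ⟨GenerateOpen.basic _ (W0_mem_G0 hE), E, hE, Subset.rfl⟩
        exact absurd ((p0_preimage_W0 hE).subset (hz _ hW0)) hxE
    · exact hz'
  · rintro _ ⟨a, rfl⟩ U ⟨-, E, -, hEU⟩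
    exact hEU (Or.inr (mem_range_self a))

lemma exists_tendsto_p0_incl0 (h : ε.HasFiniteComponentRefinements) (v : Ultrafilter X)
    (hv : ∀ E ∈ ε.sets, E ∈ v) : ∃ b : EndPt ε, Tendsto (p0 ε) v (𝓝 (incl0 ε b)) := by
  obtain ⟨b, hb⟩ := EndPt.exists_eventually_comp_eq h v (fun E x => pathComponentIn E x)
    (fun _E _ E' hE' _ => Filter.Eventually.mono (hv E' hE') fun x hx => ⟨x, hx, rfl⟩)
    (fun _E _ _F _ hEF => .of_forall fun _ => pathComponentIn_mono hEF)
  refine ⟨b, tendsto_nhds_generateFrom_iff.2 fun W hW hbW => ?_⟩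
  obtain ⟨E, hE, V, -, hbV, -, hVW⟩ := hW.2.2 b hbW
  filter_upwards [hb E hE, hv E hE] with x hxb hxE
  exact hVW x (hbV (hxb ▸ mem_pathComponentIn_self hxE))

lemma exists_tendsto_p0 (h : ε.HasFiniteComponentRefinements)
    (hK : ∀ E ∈ ε.sets, IsCompact ((⋃ a : EndPt ε, a.comp E)ᶜ)) (v : Ultrafilter X) :
    ∃ z, Tendsto (p0 ε) v (𝓝 z) := by
  by_cases hv : ∀ E ∈ ε.sets, E ∈ v
  · obtain ⟨b, hb⟩ := exists_tendsto_p0_incl0 h v hv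
    exact ⟨_, hb⟩
  · obtain ⟨E, hE, hEv⟩ : ∃ E ∈ ε.sets, E ∉ v := by simpa using hv
    have hKv : (⋃ a : EndPt ε, a.comp E)ᶜ ∈ v :=
      mem_of_superset (Ultrafilter.compl_mem_iff_notMem.2 hEv)
        (compl_subset_compl.2 (iUnion_subset fun a => a.comp_subset hE))
    obtain ⟨x, -, hx⟩ := (hK E hE).ultrafilter_le_nhds v (le_principal_iff.2 hKv)
    exact ⟨p0 ε x, ((continuous_p0 ε).tendsto x).mono_left hx⟩

lemma compactSpace_completionPts (h : ε.HasFiniteComponentRefinements)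
    (hK : ∀ E ∈ ε.sets, IsCompact ((⋃ a : EndPt ε, a.comp E)ᶜ)) :
    CompactSpace (CompletionPts ε) := by
  have := EndPt.compactSpace h
  refine ⟨isCompact_iff_ultrafilter_le_nhds.2 fun u _ => ?_⟩
  have hcover : range (p0 ε) ∪ range (incl0 ε) ∈ u := by
    rw [range_p0_union_range_incl0]
    exact univ_mem
  rcases Ultrafilter.union_mem_iff.1 hcover with hp | hi
  · have hp' : p0 ε '' univ ∈ u := by rwa [image_univ]
    obtain ⟨z, hz⟩ := exists_tendsto_p0 h hK (Ultrafilter.ofComapInfPrincipal hp')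
    refine ⟨z, mem_univ z, ?_⟩
    rwa [← Ultrafilter.ofComapInfPrincipal_eq_of_map hp']
  · obtain ⟨z, -, hz⟩ :=
      (isCompact_range (continuous_incl0 ε)).ultrafilter_le_nhds u (le_principal_iff.2 hi)
    exact ⟨z, mem_univ z, hz⟩

end Completion

/-- if every exterior set `E` contains an exterior set `E'` with finite image
`π₀(E') → π₀(E)`, then `L(Č₀(X))` is compact; if moreover for every `E` the complement of
the union of the path-components of `E` hit by ends is compact, then `Č₀(X)` is compact. -/
theorem stmt_14 (ε : Externology X)
    (h : ∀ E ∈ ε.sets, ∃ E' ∈ ε.sets, E' ⊆ E ∧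
      Set.Finite {C : Set X | ∃ x ∈ E', C = pathComponentIn E x}) :
    IsCompact (Elimit (completionExternology ε)) ∧
      ((∀ E ∈ ε.sets, IsCompact ((⋃ a : EndPt ε, a.comp E)ᶜ)) →
        CompactSpace (CompletionPts ε)) := by
  have := EndPt.compactSpace h
  refine ⟨?_, compactSpace_completionPts h⟩
  rw [elimit_completionExternology]
  exact isCompact_range (continuous_incl0 ε)
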